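/- (Backward Convergence Lemma) Suppose two compatible tuples (i₁▷i₂, D₁, D₂) and (i₃▷i₄, D₃, D₄) are both forward convergent to σ at time n₀, and |{D₁,D₂} ∩ {D₃,D₄}| = 1; let D be the unique direction not in {D₁,D₂}∪{D₃,D₄}. Then every message sent from R_{i₁}^{i₂} ∩ R_{i₃}^{i₄} in the direction D equals σ for all times n ≥ n₀ + 2N. -/

import Mathlib

/-- The four grid directions. -/
inductive Dir | north | south | east | west
deriving DecidableEq

/-- Direction vectors. -/
def dirVec : Dir → ℤ × ℤ
  | .north => (0, 1)
  | .south => (0, -1)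
  | .east => (1, 0)
  | .west => (-1, 0)

/-- The axis-aligned rectangle with corners `i₁` and `i₂`. -/
def rect (i₁ i₂ : ℤ × ℤ) : Set (ℤ × ℤ) :=
  {p | min i₁.1 i₂.1 ≤ p.1 ∧ p.1 ≤ max i₁.1 i₂.1 ∧
       min i₁.2 i₂.2 ≤ p.2 ∧ p.2 ≤ max i₁.2 i₂.2}

/-- The tuple `(i₁ ▷ i₂, D₁, D₂)` is compatible: `D₁, D₂` are orthogonal directions
and `i₂ - i₁` is a nonnegative combination of their direction vectors. -/
def compatible (i₁ i₂ : ℤ × ℤ) (D₁ D₂ : Dir) : Prop :=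
  ((dirVec D₁).1 * (dirVec D₂).1 + (dirVec D₁).2 * (dirVec D₂).2 = 0) ∧
  ∃ c₁ c₂ : ℝ, 0 ≤ c₁ ∧ 0 ≤ c₂ ∧
    c₁ * ((dirVec D₁).1 : ℝ) + c₂ * ((dirVec D₂).1 : ℝ) = ((i₂.1 - i₁.1 : ℤ) : ℝ) ∧
    c₁ * ((dirVec D₁).2 : ℝ) + c₂ * ((dirVec D₂).2 : ℝ) = ((i₂.2 - i₁.2 : ℤ) : ℝ)

/-- The interior `B = {1, …, N}²` of the `(N+2) × (N+2)` grid. -/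
def gridB (N : ℕ) : Set (ℤ × ℤ) :=
  {p | 1 ≤ p.1 ∧ p.1 ≤ N ∧ 1 ≤ p.2 ∧ p.2 ≤ N}

/-- The four lattice neighbors of a point. -/
def nbrs (p : ℤ × ℤ) : Finset (ℤ × ℤ) :=
  {(p.1 + 1, p.2), (p.1 - 1, p.2), (p.1, p.2 + 1), (p.1, p.2 - 1)}

/-!
A point of the grid sends `σ` at time `n + 1` as soon as two of the three messages it received at
time `n` (other than the one from the recipient) equal `σ`: the third lies in `[-1, 1]`.

For forward convergence through a region `R` in orthogonal directions `A, B`, the messages a point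
of `R` receives from behind along `A` and `B` come either from outside `R` (where they are `σ` by
hypothesis) or from a point where the potential `coord A + coord B` is one smaller. That potential
spans at most `2N - 2` on the grid, so induction on time gives `σ` from time `n₀ + 2N - 1` on.

For the backward lemma, the two directions perpendicular to `D` differ from `D`, hence lie in
`{D₁, D₂} ∪ {D₃, D₄}` (which misses only `D`); so a point of both rectangles receives `σ` from both
of its sides perpendicular to `D` at time `n - 1`, and sends `σ` in direction `D` at time `n`.
-/

instance : Fintype Dir :=
  ⟨{.north, .south, .east, .west}, fun x => by cases x <;> decide⟩

def coord (E : Dir) (q : ℤ × ℤ) : ℤ := (dirVec E).1 * q.1 + (dirVec E).2 * q.2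

theorem coord_add (E : Dir) (p q : ℤ × ℤ) : coord E (p + q) = coord E p + coord E q := by
  simp only [coord, Prod.fst_add, Prod.snd_add]; ring

theorem coord_sub (E : Dir) (p q : ℤ × ℤ) : coord E (p - q) = coord E p - coord E q := by
  simp only [coord, Prod.fst_sub, Prod.snd_sub]; ring

theorem coord_dirVec_self (E : Dir) : coord E (dirVec E) = 1 := by cases E <;> rfl

theorem coord_dirVec_comm (E F : Dir) : coord E (dirVec F) = coord F (dirVec E) := by
  simp only [coord]; ring

theorem ne_of_coord_eq_zero {E F : Dir} (h : coord E (dirVec F) = 0) : E ≠ F := by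
  rintro rfl; simp [coord_dirVec_self] at h

theorem dirVec_injective : Function.Injective dirVec := by
  intro E F; cases E <;> cases F <;> simp [dirVec]

theorem exists_pair_coord_eq_zero (D : Dir) :
    ∃ F F' : Dir, F ≠ F' ∧ coord D (dirVec F) = 0 ∧ coord D (dirVec F') = 0 := by
  cases D <;> decide

theorem sub_dirVec_ne_add_dirVec (q : ℤ × ℤ) {E F : Dir} (h : 0 ≤ coord E (dirVec F)) :
    q - dirVec F ≠ q + dirVec E := by
  intro hq
  have := congrArg (coord E) hq
  rw [coord_sub, coord_add, coord_dirVec_self] at this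
  omega

theorem add_dirVec_mem_nbrs (q : ℤ × ℤ) (E : Dir) : q + dirVec E ∈ nbrs q := by
  cases E <;> simp [nbrs, dirVec, Prod.ext_iff, sub_eq_add_neg]

theorem sub_dirVec_mem_nbrs (q : ℤ × ℤ) (E : Dir) : q - dirVec E ∈ nbrs q := by
  cases E <;> simp [nbrs, dirVec, Prod.ext_iff, sub_eq_add_neg]

theorem card_nbrs (q : ℤ × ℤ) : (nbrs q).card = 4 := by
  rw [nbrs, Finset.card_insert_of_notMem, Finset.card_insert_of_notMem, Finset.card_pair] <;>
    simp [Prod.ext_iff] <;> omega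

theorem one_le_of_mem_gridB {N : ℕ} {q : ℤ × ℤ} (hq : q ∈ gridB N) : 1 ≤ N := by
  obtain ⟨h₁, h₂, -⟩ := hq
  exact_mod_cast h₁.trans h₂

theorem rect_subset_gridB {N : ℕ} {i₁ i₂ : ℤ × ℤ} (h₁ : i₁ ∈ gridB N) (h₂ : i₂ ∈ gridB N) :
    rect i₁ i₂ ⊆ gridB N := by
  obtain ⟨_, _, _, _⟩ := h₁
  obtain ⟨_, _, _, _⟩ := h₂
  rintro x ⟨_, _, _, _⟩
  refine ⟨?_, ?_, ?_, ?_⟩ <;> omega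

theorem exists_coord_bounds_gridB (N : ℕ) (E : Dir) :
    ∃ lo : ℤ, ∀ q ∈ gridB N, lo ≤ coord E q ∧ coord E q ≤ lo + (N - 1) := by
  cases E
  case north | east => exact ⟨1, fun q hq => by simp [coord, dirVec, gridB] at *; omega⟩
  case south | west => exact ⟨-N, fun q hq => by simp [coord, dirVec, gridB] at *; omega⟩

theorem union_eq_univ_erase_of_card_inter_eq_one {α : Type*} [Fintype α] [DecidableEq α]
    {s t : Finset α} {a : α} (hα : Fintype.card α = 4) (hs : s.card = 2) (ht : t.card = 2)
    (hst : (s ∩ t).card = 1) (ha : a ∉ s ∪ t) : s ∪ t = Finset.univ.erase a := by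
  have hcard : (s ∪ t).card = 3 := by
    have := Finset.card_union_add_card_inter s t
    omega
  refine Finset.eq_of_subset_of_card_le
    (fun x hx => Finset.mem_erase.2 ⟨ne_of_mem_of_not_mem hx ha, Finset.mem_univ x⟩) ?_
  rw [Finset.card_erase_of_mem (Finset.mem_univ a), Finset.card_univ, hα, hcard]

theorem sign_sum_eq_of_two_eq {ι : Type*} [DecidableEq ι] {s : Finset ι} (hs : s.card = 3)
    {f : ι → ℤ} (hf : ∀ i ∈ s, |f i| ≤ 1) {a b : ι} (ha : a ∈ s) (hb : b ∈ s) (hab : a ≠ b)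
    {σ : ℤ} (hσ : σ = 1 ∨ σ = -1) (hfa : f a = σ) (hfb : f b = σ) :
    (∑ i ∈ s, f i).sign = σ := by
  have hb' : b ∈ s.erase a := Finset.mem_erase.2 ⟨hab.symm, hb⟩
  obtain ⟨c, hc⟩ : ∃ c, (s.erase a).erase b = {c} := Finset.card_eq_one.1 (by
    rw [Finset.card_erase_of_mem hb', Finset.card_erase_of_mem ha, hs])
  have hcs : c ∈ s := by
    have : c ∈ (s.erase a).erase b := hc ▸ Finset.mem_singleton_self c
    exact Finset.mem_of_mem_erase (Finset.mem_of_mem_erase this)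
  rw [← Finset.add_sum_erase s f ha, ← Finset.add_sum_erase _ f hb', hc, Finset.sum_singleton,
    hfa, hfb]
  have := abs_le.1 (hf c hcs)
  rcases hσ with rfl | rfl
  · exact Int.sign_eq_one_of_pos (by omega)
  · exact Int.sign_eq_neg_one_of_neg (by omega)

/-- `m n p q` is the message sent from `p` to `q` at time `n`. -/
structure IsDiffMessageDynamics (N : ℕ) (m : ℕ → (ℤ × ℤ) → (ℤ × ℤ) → ℤ) : Prop where
  range : ∀ n p q, m n p q = -1 ∨ m n p q = 0 ∨ m n p q = 1
  update : ∀ p ∈ gridB N, ∀ q ∈ nbrs p, ∀ n : ℕ, 0 < n →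
    m n p q = Int.sign (∑ k ∈ nbrs p \ {q}, m (n-1) k p)

namespace IsDiffMessageDynamics

variable {N : ℕ} {m : ℕ → (ℤ × ℤ) → (ℤ × ℤ) → ℤ} {σ : ℤ}

theorem send_eq_of_arrivals (hm : IsDiffMessageDynamics N m) (hσ : σ = 1 ∨ σ = -1)
    {q : ℤ × ℤ} (hq : q ∈ gridB N) {n : ℕ} {E F₁ F₂ : Dir} (hF : F₁ ≠ F₂)
    (h₁ : 0 ≤ coord E (dirVec F₁)) (h₂ : 0 ≤ coord E (dirVec F₂))
    (hm₁ : m n (q - dirVec F₁) q = σ) (hm₂ : m n (q - dirVec F₂) q = σ) :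
    m (n + 1) q (q + dirVec E) = σ := by
  rw [hm.update q hq _ (add_dirVec_mem_nbrs q E) (n + 1) n.succ_pos, Nat.add_sub_cancel]
  have hcard : (nbrs q \ {q + dirVec E}).card = 3 := by
    rw [Finset.card_sdiff_of_subset (Finset.singleton_subset_iff.2 (add_dirVec_mem_nbrs q E)),
      card_nbrs, Finset.card_singleton]
  have hrange : ∀ k ∈ nbrs q \ {q + dirVec E}, |m n k q| ≤ 1 := by
    intro k _
    rcases hm.range n k q with h | h | h <;> simp [h]
  have hmem : ∀ F, 0 ≤ coord E (dirVec F) → q - dirVec F ∈ nbrs q \ {q + dirVec E} := fun F hF =>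
    Finset.mem_sdiff.2 ⟨sub_dirVec_mem_nbrs q F,
      Finset.notMem_singleton.2 (sub_dirVec_ne_add_dirVec q hF)⟩
  exact sign_sum_eq_of_two_eq hcard hrange (hmem F₁ h₁) (hmem F₂ h₂)
    (by simpa using dirVec_injective.ne hF) hσ hm₁ hm₂

theorem forward_convergence (hm : IsDiffMessageDynamics N m) (hσ : σ = 1 ∨ σ = -1)
    {R : Set (ℤ × ℤ)} (hR : R ⊆ gridB N) {A B : Dir} (hAB : coord A (dirVec B) = 0) {n₀ : ℕ}
    (hin : ∀ E ∈ ({A, B} : Set Dir), ∀ p : ℤ × ℤ, p ∉ R → p + dirVec E ∈ R →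
      ∀ n : ℕ, n₀ ≤ n → m n p (p + dirVec E) = σ) :
    ∀ E ∈ ({A, B} : Set Dir), ∀ p : ℤ × ℤ, p + dirVec E ∈ R →
      ∀ n : ℕ, n₀ + 2 * N ≤ n + 1 → m n p (p + dirVec E) = σ := by
  obtain ⟨loA, hloA⟩ := exists_coord_bounds_gridB N A
  obtain ⟨loB, hloB⟩ := exists_coord_bounds_gridB N B
  set φ : ℤ × ℤ → ℤ := fun q => coord A q + coord B q - loA - loB with hφ
  have hφ_bounds : ∀ q ∈ R, 0 ≤ φ q ∧ φ q ≤ 2 * N - 2 := fun q hq => by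
    have := hloA q (hR hq); have := hloB q (hR hq); simp only [hφ]; omega
  have hBA : coord B (dirVec A) = 0 := by rwa [coord_dirVec_comm]
  have hφ_back : ∀ F ∈ ({A, B} : Set Dir), ∀ q, φ (q - dirVec F) = φ q - 1 := by
    rintro F (rfl | rfl) q <;>
      simp only [hφ, coord_sub, coord_dirVec_self, hAB, hBA] <;> ring
  have hnonneg : ∀ E ∈ ({A, B} : Set Dir), ∀ F ∈ ({A, B} : Set Dir), 0 ≤ coord E (dirVec F) := by
    rintro E (rfl | rfl) F (rfl | rfl) <;> simp [coord_dirVec_self, hAB, hBA]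
  have key : ∀ n : ℕ, ∀ q ∈ R, (n₀ : ℤ) + φ q < n →
      ∀ E ∈ ({A, B} : Set Dir), m n q (q + dirVec E) = σ := by
    intro n
    induction n with
    | zero => intro q hq hlt; have := hφ_bounds q hq; omega
    | succ n ih =>
      intro q hq hlt E hE
      have arrive : ∀ F ∈ ({A, B} : Set Dir), m n (q - dirVec F) q = σ := by
        intro F hF
        have hback : q - dirVec F + dirVec F = q := sub_add_cancel q (dirVec F)
        by_cases hqF : q - dirVec F ∈ R
        · simpa only [hback] using ih _ hqF (by rw [hφ_back F hF]; push_cast at hlt; omega) F hF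
        · have := hφ_bounds q hq
          simpa only [hback] using hin F hF _ hqF (by rwa [hback]) n (by push_cast at hlt; omega)
      exact hm.send_eq_of_arrivals hσ (hR hq) (ne_of_coord_eq_zero hAB)
        (hnonneg E hE A (by simp)) (hnonneg E hE B (by simp))
        (arrive A (by simp)) (arrive B (by simp))
  intro E hE p hp n hn
  by_cases hpR : p ∈ R
  · exact key n p hpR (by have := hφ_bounds p hpR; omega) E hE
  · exact hin E hE p hpR hp n (by have := one_le_of_mem_gridB (hR hp); omega)

end IsDiffMessageDynamics

/-- Backward Convergence Lemma: if two compatible tuples `(i₁ ▷ i₂, D₁, D₂)` and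
`(i₃ ▷ i₄, D₃, D₄)` are both forward convergent to `σ` at time `n₀`, their direction
pairs share exactly one direction, and `D` is the unique direction outside
`{D₁,D₂} ∪ {D₃,D₄}`, then every message sent from `R_{i₁}^{i₂} ∩ R_{i₃}^{i₄}` in
direction `D` equals `σ` for all `n ≥ n₀ + 2N`. -/
theorem backward_convergence_lemma
    (N : ℕ) (σ : ℤ) (hσ : σ = 1 ∨ σ = -1) (n₀ : ℕ)
    (i₁ i₂ i₃ i₄ : ℤ × ℤ)
    (hi₁ : i₁ ∈ gridB N) (hi₂ : i₂ ∈ gridB N) (hi₃ : i₃ ∈ gridB N) (hi₄ : i₄ ∈ gridB N)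
    (D₁ D₂ D₃ D₄ : Dir)
    (hcomp₁ : compatible i₁ i₂ D₁ D₂) (hcomp₂ : compatible i₃ i₄ D₃ D₄)
    (hmeet : (({D₁, D₂} : Finset Dir) ∩ ({D₃, D₄} : Finset Dir)).card = 1)
    (D : Dir) (hD : D ∉ (({D₁, D₂} : Finset Dir) ∪ ({D₃, D₄} : Finset Dir)))
    (m : ℕ → (ℤ × ℤ) → (ℤ × ℤ) → ℤ)
    -- all messages lie in {-1, 0, 1}
    (hrange : ∀ n p q, m n p q = -1 ∨ m n p q = 0 ∨ m n p q = 1)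
    -- difference-message update for interior senders
    (hup : ∀ p ∈ gridB N, ∀ q ∈ nbrs p, ∀ n : ℕ, 0 < n →
      m n p q = Int.sign (∑ k ∈ nbrs p \ {q}, m (n-1) k p))
    (hFC₁ : ∀ D' ∈ ({D₁, D₂} : Set Dir), ∀ p : ℤ × ℤ, p ∉ rect i₁ i₂ →
      p + dirVec D' ∈ rect i₁ i₂ → ∀ n : ℕ, n₀ ≤ n → m n p (p + dirVec D') = σ)
    (hFC₂ : ∀ D' ∈ ({D₃, D₄} : Set Dir), ∀ p : ℤ × ℤ, p ∉ rect i₃ i₄ →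
      p + dirVec D' ∈ rect i₃ i₄ → ∀ n : ℕ, n₀ ≤ n → m n p (p + dirVec D') = σ) :
    ∀ p ∈ rect i₁ i₂ ∩ rect i₃ i₄, ∀ n : ℕ,
      n₀ + 2 * N ≤ n → m n p (p + dirVec D) = σ := by
  intro p ⟨hp₁, hp₂⟩ n hn
  have hm : IsDiffMessageDynamics N m := ⟨hrange, hup⟩
  have hpB : p ∈ gridB N := rect_subset_gridB hi₁ hi₂ hp₁
  have hcover : ({D₁, D₂} ∪ {D₃, D₄} : Finset Dir) = Finset.univ.erase D :=
    union_eq_univ_erase_of_card_inter_eq_one rfl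
      (Finset.card_pair (ne_of_coord_eq_zero hcomp₁.1))
      (Finset.card_pair (ne_of_coord_eq_zero hcomp₂.1)) hmeet hD
  obtain ⟨k, rfl⟩ : ∃ k, n = k + 1 := ⟨n - 1, by have := one_le_of_mem_gridB hpB; omega⟩
  have arrive : ∀ F ≠ D, m k (p - dirVec F) p = σ := by
    intro F hF
    have hback : p - dirVec F + dirVec F = p := sub_add_cancel p (dirVec F)
    have hF' : F ∈ ({D₁, D₂} ∪ {D₃, D₄} : Finset Dir) := by
      rw [hcover]; exact Finset.mem_erase.2 ⟨hF, Finset.mem_univ F⟩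
    rcases Finset.mem_union.1 hF' with h | h
    · simpa only [hback] using hm.forward_convergence hσ (rect_subset_gridB hi₁ hi₂) hcomp₁.1
        hFC₁ F (by simpa using h) (p - dirVec F) (by rwa [hback]) k (by omega)
    · simpa only [hback] using hm.forward_convergence hσ (rect_subset_gridB hi₃ hi₄) hcomp₂.1
        hFC₂ F (by simpa using h) (p - dirVec F) (by rwa [hback]) k (by omega)
  obtain ⟨F, F', hFF', hF, hF'⟩ := exists_pair_coord_eq_zero D
  exact hm.send_eq_of_arrivals hσ hpB hFF' hF.ge hF'.ge
    (arrive F (ne_of_coord_eq_zero hF).symm) (arrive F' (ne_of_coord_eq_zero hF').symm)
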